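/- arXiv:math/0401160 — 3 statements merged into one kernel-verified Lean document; each statement's English description precedes it below -/
import Mathlib

section
/- Let C be a coaugmented differential graded coalgebra, A an augmented differential graded algebra, and τ: C → A a homogeneous degree -1 map. Suppose τ satisfies the twisting cochain conditions D(τ) = τ ∪ τ, τ∘η = 0, ε∘τ = 0. Let M be a differential graded right C-comodule and N a differential graded left A-module. Then the operator d_τ = d - (τ ∩ ·) on M⊗N squares to zero, i.e., d_τ ∘ d_τ = 0, so M ⊗_τ N := (M⊗N, d_τ) is a chain complex. -/
/-!
Write `d` for the tensor differential and `T = τ ∩ ·`, so that `d_τ² = d² - (dT + Td) + T²`.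
Here `d² = 0`; the Leibniz rule of the action together with the compatibility of the coaction
with the differentials gives `dT + Td = (Dτ) ∩ ·`; coassociativity of the coaction and
associativity of the action give `T² = (τ ∪ τ) ∩ ·`. The twisting equation `Dτ = τ ∪ τ` makes
the last two cancel. All signs are checked on homogeneous pure tensors, where the Koszul sign
operators act by scalars.
-/

open scoped TensorProduct DirectSum

noncomputable section
namespace HPT

/-- The sign `(-1)^k` for an integer `k`. -/
def sgn (k : ℤ) : ℤ := (-1) ^ k.natAbs

variable {R : Type} [CommRing R]

section Graded

variable {M : Type} [AddCommGroup M] [Module R M]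
variable {N : Type} [AddCommGroup N] [Module R N]

/-- `f : M → N` is homogeneous of degree `r` with respect to the gradings `ℳ`, `𝒩`. -/
def IsDeg (ℳ : ℤ → Submodule R M) (𝒩 : ℤ → Submodule R N) (r : ℤ) (f : M →ₗ[R] N) : Prop :=
  ∀ i : ℤ, ∀ x ∈ ℳ i, f x ∈ 𝒩 (i + r)

/-- The image of `p ⊗ q` inside `M ⊗ N`. -/
def tmul' (p : Submodule R M) (q : Submodule R N) : Submodule R (M ⊗[R] N) :=
  LinearMap.range (TensorProduct.map p.subtype q.subtype)

/-- The sign operator multiplying a homogeneous element of degree `i` by `(-1)^(k*i)`;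
used to implement the Eilenberg-Koszul sign convention. -/
def sgnOp (ℳ : ℤ → Submodule R M) [DirectSum.Decomposition ℳ] (k : ℤ) : M →ₗ[R] M :=
  (DirectSum.decomposeLinearEquiv ℳ).symm.toLinearMap ∘ₗ
    (DirectSum.toModule R ℤ (⨁ i, ↥(ℳ i)) fun i =>
      sgn (k * i) • DirectSum.lof R ℤ (fun j => ↥(ℳ j)) i) ∘ₗ
    (DirectSum.decomposeLinearEquiv ℳ).toLinearMap

/-- The Hom-complex differential `D(f) = d_N ∘ f - (-1)^{|f|} f ∘ d_M` for `f` of degree `r`. -/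
def DhGen (dM : M →ₗ[R] M) (dN : N →ₗ[R] N) (r : ℤ) (f : M →ₗ[R] N) : M →ₗ[R] N :=
  dN ∘ₗ f - sgn r • (f ∘ₗ dM)

/-- The cup pairing `f ∪ g = μ ∘ (f ⊗ g) ∘ Δ_M`, with the Koszul sign `(-1)^{|g| |m'|}`
implemented by the sign operator `σ` (to be taken to be `sgnOp ℳ |g|`). -/
def cupGen {C B : Type} [AddCommGroup C] [Module R C] [AddCommGroup B] [Module R B]
    (ΔM : M →ₗ[R] M ⊗[R] C) (μ : N ⊗[R] B →ₗ[R] N) (σ : M →ₗ[R] M)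
    (f : M →ₗ[R] N) (g : C →ₗ[R] B) : M →ₗ[R] N :=
  μ ∘ₗ TensorProduct.map f g ∘ₗ LinearMap.rTensor C σ ∘ₗ ΔM

/-- The cap operator `φ ∩ ·` on `M ⊗ N`, where `M` carries a comodule structure map
`ΔM : M → M ⊗ C` and `N` a module structure map `μ : A ⊗ N → N`; `k` is the degree of `φ`. -/
def cap {C A' : Type} [AddCommGroup C] [Module R C] [AddCommGroup A'] [Module R A']
    (𝓜 : ℤ → Submodule R M) [DirectSum.Decomposition 𝓜]
    (ΔM : M →ₗ[R] M ⊗[R] C) (μ : A' ⊗[R] N →ₗ[R] N) (k : ℤ) (φ : C →ₗ[R] A') :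
    M ⊗[R] N →ₗ[R] M ⊗[R] N :=
  LinearMap.lTensor M (μ ∘ₗ LinearMap.rTensor N φ) ∘ₗ
    (TensorProduct.assoc R M C N).toLinearMap ∘ₗ
    LinearMap.rTensor N (LinearMap.rTensor C (sgnOp 𝓜 k) ∘ₗ ΔM)

/-- The tensor-product differential `d ⊗ 1 + (-1)^{|m|} 1 ⊗ d` on `M ⊗ N`. -/
def dTens (𝓜 : ℤ → Submodule R M) [DirectSum.Decomposition 𝓜]
    (dM : M →ₗ[R] M) (dN : N →ₗ[R] N) : M ⊗[R] N →ₗ[R] M ⊗[R] N :=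
  LinearMap.rTensor N dM + LinearMap.lTensor M dN ∘ₗ LinearMap.rTensor N (sgnOp 𝓜 1)

end Graded

section Coalg

variable {C : Type} [AddCommGroup C] [Module R C]

/-- Differential graded coalgebra structure data (internally ℤ-graded). -/
structure IsDGCoalg (𝒞 : ℤ → Submodule R C) [DirectSum.Decomposition 𝒞]
    (Δ : C →ₗ[R] C ⊗[R] C) (εC : C →ₗ[R] R) (dC : C →ₗ[R] C) : Prop where
  coassoc : (TensorProduct.assoc R C C C).toLinearMap ∘ₗ LinearMap.rTensor C Δ ∘ₗ Δ
      = LinearMap.lTensor C Δ ∘ₗ Δ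
  counit_left : (TensorProduct.lid R C).toLinearMap ∘ₗ LinearMap.rTensor C εC ∘ₗ Δ
      = LinearMap.id
  counit_right : (TensorProduct.rid R C).toLinearMap ∘ₗ LinearMap.lTensor C εC ∘ₗ Δ
      = LinearMap.id
  comul_deg : ∀ n : ℤ, ∀ x ∈ 𝒞 n, Δ x ∈ ⨆ p : ℤ, tmul' (𝒞 p) (𝒞 (n - p))
  d_deg : IsDeg 𝒞 𝒞 (-1) dC
  d_sq : dC ∘ₗ dC = 0
  comul_chain : Δ ∘ₗ dC =
      (LinearMap.rTensor C dC + LinearMap.lTensor C dC ∘ₗ LinearMap.rTensor C (sgnOp 𝒞 1)) ∘ₗ Δ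
  counit_deg : ∀ i : ℤ, i ≠ 0 → ∀ x ∈ 𝒞 i, εC x = 0
  counit_chain : εC ∘ₗ dC = 0

/-- Coaugmentation data for a dg coalgebra: a grouplike cycle `e` of degree 0. -/
structure IsCoaug (Δ : C →ₗ[R] C ⊗[R] C) (εC : C →ₗ[R] R) (dC : C →ₗ[R] C)
    (𝒞 : ℤ → Submodule R C) (e : C) : Prop where
  mem : e ∈ 𝒞 0
  counit : εC e = 1
  diag : Δ e = e ⊗ₜ[R] e
  d : dC e = 0

end Coalg

section Alg

variable {A : Type} [Ring A] [Algebra R A]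

/-- Differential graded algebra structure (internally graded, multiplication of `A`). -/
structure IsDGAlg (𝒜 : ℤ → Submodule R A) (dA : A →ₗ[R] A) : Prop where
  d_deg : IsDeg 𝒜 𝒜 (-1) dA
  d_sq : dA ∘ₗ dA = 0
  leibniz : ∀ i : ℤ, ∀ x ∈ 𝒜 i, ∀ y : A, dA (x * y) = dA x * y + sgn i • (x * dA y)
  d_one : dA 1 = 0

/-- Augmentation for a dg algebra. -/
structure IsAug (𝒜 : ℤ → Submodule R A) (dA : A →ₗ[R] A) (εA : A →ₐ[R] R) : Prop where
  vanish : ∀ i : ℤ, i ≠ 0 → ∀ x ∈ 𝒜 i, εA x = 0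
  chain : ∀ x : A, εA (dA x) = 0

end Alg

section Conv

variable {C : Type} [AddCommGroup C] [Module R C]
variable {A : Type} [Ring A] [Algebra R A]

/-- The cup (convolution) product on `Hom(C, A)`; `s` is the degree of `g`. -/
def cup (𝒞 : ℤ → Submodule R C) [DirectSum.Decomposition 𝒞] (Δ : C →ₗ[R] C ⊗[R] C)
    (s : ℤ) (f g : C →ₗ[R] A) : C →ₗ[R] A :=
  cupGen Δ (LinearMap.mul' R A) (sgnOp 𝒞 s) f g

/-- The convolution unit `η ∘ ε : C → A`. -/
def convOne (A : Type) [Ring A] [Algebra R A] (εC : C →ₗ[R] R) : C →ₗ[R] A :=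
  Algebra.linearMap R A ∘ₗ εC

variable (𝒞 : ℤ → Submodule R C) [DirectSum.Decomposition 𝒞]

/-- `τ : C → A` is a twisting cochain. -/
structure IsTwisting (Δ : C →ₗ[R] C ⊗[R] C) (εC : C →ₗ[R] R) (dC : C →ₗ[R] C) (e : C)
    (𝒜 : ℤ → Submodule R A) (dA : A →ₗ[R] A) (εA : A →ₐ[R] R) (τ : C →ₗ[R] A) : Prop where
  deg : IsDeg 𝒞 𝒜 (-1) τ
  eq : DhGen dC dA (-1) τ = cup 𝒞 Δ (-1) τ τ
  unit : τ e = 0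
  counit : εA.toLinearMap ∘ₗ τ = 0

/-- `ψ` is a homotopy of twisting cochains from `τ₁` to `τ₂`. -/
structure IsTCHomotopy (Δ : C →ₗ[R] C ⊗[R] C) (εC : C →ₗ[R] R) (dC : C →ₗ[R] C) (e : C)
    (𝒜 : ℤ → Submodule R A) (dA : A →ₗ[R] A) (εA : A →ₐ[R] R)
    (τ₁ τ₂ ψ : C →ₗ[R] A) : Prop where
  deg : IsDeg 𝒞 𝒜 0 ψ
  eq : DhGen dC dA 0 ψ = cup 𝒞 Δ 0 τ₁ ψ - cup 𝒞 Δ (-1) ψ τ₂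
  unit : ψ e = 1
  counit : εA.toLinearMap ∘ₗ ψ = εC

end Conv

section Mod

variable {A : Type} [Ring A] [Algebra R A]
variable {N : Type} [AddCommGroup N] [Module R N]

/-- Differential graded left module over a dg algebra. -/
structure IsDGModLeft (𝒜 : ℤ → Submodule R A) (dA : A →ₗ[R] A)
    (𝒩 : ℤ → Submodule R N) (dN : N →ₗ[R] N) (μ : A ⊗[R] N →ₗ[R] N) : Prop where
  one_act : ∀ x : N, μ (1 ⊗ₜ x) = x
  mul_act : ∀ (a b : A) (x : N), μ ((a * b) ⊗ₜ x) = μ (a ⊗ₜ μ (b ⊗ₜ x))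
  act_deg : ∀ i j : ℤ, ∀ a ∈ 𝒜 i, ∀ x ∈ 𝒩 j, μ (a ⊗ₜ x) ∈ 𝒩 (i + j)
  d_deg : IsDeg 𝒩 𝒩 (-1) dN
  d_sq : dN ∘ₗ dN = 0
  chain : ∀ i : ℤ, ∀ a ∈ 𝒜 i, ∀ x : N,
    dN (μ (a ⊗ₜ x)) = μ (dA a ⊗ₜ x) + sgn i • μ (a ⊗ₜ dN x)

/-- Differential graded right module over a dg algebra. -/
structure IsDGModRight (𝒜 : ℤ → Submodule R A) (dA : A →ₗ[R] A)
    (𝒩 : ℤ → Submodule R N) (dN : N →ₗ[R] N) (μ : N ⊗[R] A →ₗ[R] N) : Prop where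
  one_act : ∀ x : N, μ (x ⊗ₜ 1) = x
  mul_act : ∀ (x : N) (a b : A), μ (x ⊗ₜ (a * b)) = μ (μ (x ⊗ₜ a) ⊗ₜ b)
  act_deg : ∀ i j : ℤ, ∀ x ∈ 𝒩 i, ∀ a ∈ 𝒜 j, μ (x ⊗ₜ a) ∈ 𝒩 (i + j)
  d_deg : IsDeg 𝒩 𝒩 (-1) dN
  d_sq : dN ∘ₗ dN = 0
  chain : ∀ i j : ℤ, ∀ x ∈ 𝒩 i, ∀ a ∈ 𝒜 j,
    dN (μ (x ⊗ₜ a)) = μ (dN x ⊗ₜ a) + sgn i • μ (x ⊗ₜ dA a)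

variable {C : Type} [AddCommGroup C] [Module R C]
variable {M : Type} [AddCommGroup M] [Module R M]

/-- Differential graded comodule over a dg coalgebra, with structure map `M → M ⊗ C`. -/
structure IsDGComod (𝒞 : ℤ → Submodule R C) (Δ : C →ₗ[R] C ⊗[R] C)
    (εC : C →ₗ[R] R) (dC : C →ₗ[R] C)
    (𝓜 : ℤ → Submodule R M) [DirectSum.Decomposition 𝓜] (dM : M →ₗ[R] M)
    (ΔM : M →ₗ[R] M ⊗[R] C) : Prop where
  coassoc : (TensorProduct.assoc R M C C).toLinearMap ∘ₗ LinearMap.rTensor C ΔM ∘ₗ ΔM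
      = LinearMap.lTensor M Δ ∘ₗ ΔM
  counit : (TensorProduct.rid R M).toLinearMap ∘ₗ LinearMap.lTensor M εC ∘ₗ ΔM = LinearMap.id
  deg : ∀ n : ℤ, ∀ x ∈ 𝓜 n, ΔM x ∈ ⨆ p : ℤ, tmul' (𝓜 p) (𝒞 (n - p))
  d_deg : IsDeg 𝓜 𝓜 (-1) dM
  d_sq : dM ∘ₗ dM = 0
  chain : ΔM ∘ₗ dM =
    (LinearMap.rTensor C dM + LinearMap.lTensor M dC ∘ₗ LinearMap.rTensor C (sgnOp 𝓜 1)) ∘ₗ ΔM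

end Mod

section Cocomplete

variable {C : Type} [AddCommGroup C] [Module R C]

/-- Iterated tensor powers of `C`. -/
def iTensM (R C : Type) [CommRing R] [AddCommGroup C] [Module R C] : ℕ → ModuleCat R
  | 0 => ModuleCat.of R C
  | n + 1 => ModuleCat.of R ((iTensM R C n) ⊗[R] C)

/-- The reduced projection `id - η ∘ ε` associated to a coaugmentation. -/
def redProj (εC : C →ₗ[R] R) (e : C) : C →ₗ[R] C :=
  LinearMap.id - LinearMap.toSpanSingleton R C e ∘ₗ εC

/-- The reduced iterated comultiplication `C → (JC)^{⊗(n+1)}`. -/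
def redIter (Δ : C →ₗ[R] C ⊗[R] C) (π' : C →ₗ[R] C) : (n : ℕ) → (C →ₗ[R] iTensM R C n)
  | 0 => π'
  | n + 1 => TensorProduct.map (redIter Δ π' n) π' ∘ₗ Δ

/-- The coaugmentation filtration `F_n C = ker (C → (JC)^{⊗(n+1)})`. -/
def coaugFil (Δ : C →ₗ[R] C ⊗[R] C) (εC : C →ₗ[R] R) (e : C) (n : ℕ) : Submodule R C :=
  LinearMap.ker (redIter Δ (redProj εC e) n)

/-- The coaugmented coalgebra `C` is cocomplete: it is the union of the coaugmentation
filtration. -/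
def Cocomplete (Δ : C →ₗ[R] C ⊗[R] C) (εC : C →ₗ[R] R) (e : C) : Prop :=
  ∀ x : C, ∃ n : ℕ, x ∈ coaugFil Δ εC e n

end Cocomplete

end HPT

namespace HPT

lemma sgn_eq_units_zpow (k : ℤ) : sgn k = (((-1 : ℤˣ) ^ k : ℤˣ) : ℤ) := by
  obtain ⟨n, rfl | rfl⟩ := Int.eq_nat_or_neg k <;> simp [sgn]

lemma sgn_add (a b : ℤ) : sgn (a + b) = sgn a * sgn b := by
  simp [sgn_eq_units_zpow, zpow_add]

lemma sgn_neg (a : ℤ) : sgn (-a) = sgn a := by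
  rw [sgn, Int.natAbs_neg, sgn]

lemma sgn_mul_self (a : ℤ) : sgn a * sgn a = 1 := by
  rw [← sgn_add, ← two_mul, sgn_eq_units_zpow, zpow_mul]
  simp

lemma sgn_sub_one (a : ℤ) : sgn (a - 1) = -sgn a := by
  rw [sub_eq_add_neg, sgn_add]
  simp [sgn]

section Graded

variable {R : Type} [CommRing R]
variable {M : Type} [AddCommGroup M] [Module R M]
variable {N : Type} [AddCommGroup N] [Module R N]
variable {C : Type} [AddCommGroup C] [Module R C]
variable {P : Type} [AddCommGroup P] [Module R P]

lemma sgnOp_apply_of_mem (ℳ : ℤ → Submodule R M) [DirectSum.Decomposition ℳ] (k : ℤ)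
    {i : ℤ} {x : M} (hx : x ∈ ℳ i) : sgnOp ℳ k x = sgn (k * i) • x := by
  have hlof : DirectSum.decompose ℳ x = DirectSum.lof R ℤ (fun j => ↥(ℳ j)) i ⟨x, hx⟩ :=
    DirectSum.decompose_of_mem ℳ hx
  simp only [sgnOp, LinearMap.comp_apply, LinearEquiv.coe_coe,
    DirectSum.decomposeLinearEquiv_apply, hlof, DirectSum.toModule_lof, LinearMap.smul_apply,
    map_zsmul, DirectSum.decomposeLinearEquiv_symm_apply]
  rw [DirectSum.lof_eq_of, DirectSum.decompose_symm_of]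

lemma sgnOp_zero (ℳ : ℤ → Submodule R M) [DirectSum.Decomposition ℳ] :
    sgnOp ℳ 0 = LinearMap.id := by
  have h : DirectSum.toModule R ℤ (⨁ i, ↥(ℳ i)) (DirectSum.lof R ℤ (fun j => ↥(ℳ j)))
      = LinearMap.id := by
    ext i x : 2
    simp
  ext x
  simp [sgnOp, sgn, h]

lemma tensorProduct_ext_of_homogeneous (ℳ : ℤ → Submodule R M) [DirectSum.Decomposition ℳ]
    {f g : M ⊗[R] N →ₗ[R] P}
    (h : ∀ (i : ℤ) (m : M), m ∈ ℳ i → ∀ n : N, f (m ⊗ₜ n) = g (m ⊗ₜ n)) : f = g := by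
  refine TensorProduct.ext' fun m n => ?_
  induction m using DirectSum.Decomposition.inductionOn ℳ with
  | zero => simp
  | homogeneous m => exact h _ m m.2 n
  | add m m' hm hm' => rw [TensorProduct.add_tmul, map_add, map_add, hm, hm']

lemma iSup_tmul'_le_eqLocus (p : ℤ → Submodule R M) (q : ℤ → Submodule R N)
    {f g : M ⊗[R] N →ₗ[R] P}
    (h : ∀ (k : ℤ) (m : M), m ∈ p k → ∀ n : N, n ∈ q k → f (m ⊗ₜ n) = g (m ⊗ₜ n)) :
    ⨆ k, tmul' (p k) (q k) ≤ LinearMap.eqLocus f g := by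
  refine iSup_le fun k => ?_
  rintro _ ⟨y, rfl⟩
  induction y using TensorProduct.induction_on with
  | zero => simp
  | tmul m n => simpa using h k m m.2 n n.2
  | add y y' hy hy' => rw [map_add]; exact add_mem hy hy'

lemma rTensor_sgnOp_eq_smul_lTensor_sgnOp (𝓜 : ℤ → Submodule R M) [DirectSum.Decomposition 𝓜]
    (𝒞 : ℤ → Submodule R C) [DirectSum.Decomposition 𝒞] (k j : ℤ) {z : M ⊗[R] C}
    (hz : z ∈ ⨆ p, tmul' (𝓜 p) (𝒞 (j - p))) :
    LinearMap.rTensor C (sgnOp 𝓜 k) z = sgn (k * j) • LinearMap.lTensor M (sgnOp 𝒞 k) z := by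
  refine (LinearMap.mem_eqLocus).1 (iSup_tmul'_le_eqLocus _ _
    (g := sgn (k * j) • LinearMap.lTensor M (sgnOp 𝒞 k)) (fun p m hm c hc => ?_) hz)
  rw [LinearMap.rTensor_tmul, LinearMap.smul_apply, LinearMap.lTensor_tmul,
    sgnOp_apply_of_mem 𝓜 k hm, sgnOp_apply_of_mem 𝒞 k hc, TensorProduct.tmul_smul, smul_smul,
    ← TensorProduct.smul_tmul', show k * j = k * p + k * (j - p) by ring, sgn_add, mul_assoc,
    sgn_mul_self, mul_one]

end Graded

section Cap

variable {R : Type} [CommRing R]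
variable {C : Type} [AddCommGroup C] [Module R C]
variable {A : Type} [Ring A] [Algebra R A]
variable {M : Type} [AddCommGroup M] [Module R M]
variable {N : Type} [AddCommGroup N] [Module R N]

def capAt {B : Type} [AddCommGroup B] [Module R B]
    (μN : A ⊗[R] N →ₗ[R] N) (φ : B →ₗ[R] A) (n : N) : M ⊗[R] B →ₗ[R] M ⊗[R] N :=
  LinearMap.lTensor M (μN ∘ₗ (TensorProduct.mk R A N).flip n ∘ₗ φ)

@[simp] lemma capAt_tmul {B : Type} [AddCommGroup B] [Module R B]
    (μN : A ⊗[R] N →ₗ[R] N) (φ : B →ₗ[R] A) (n : N) (m : M) (b : B) :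
    capAt μN φ n (m ⊗ₜ b) = m ⊗ₜ μN (φ b ⊗ₜ n) := rfl

lemma capAt_comp_lTensor {B : Type} [AddCommGroup B] [Module R B]
    (μN : A ⊗[R] N →ₗ[R] N) (φ : C →ₗ[R] A) (g : B →ₗ[R] C) (n : N) :
    (capAt μN φ n : M ⊗[R] C →ₗ[R] M ⊗[R] N) ∘ₗ LinearMap.lTensor M g = capAt μN (φ ∘ₗ g) n :=
  TensorProduct.ext' fun _ _ => rfl

lemma cap_tmul (𝓜 : ℤ → Submodule R M) [DirectSum.Decomposition 𝓜]
    (ΔM : M →ₗ[R] M ⊗[R] C) (μN : A ⊗[R] N →ₗ[R] N) (k : ℤ) (φ : C →ₗ[R] A) (m : M) (n : N) :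
    cap 𝓜 ΔM μN k φ (m ⊗ₜ n) = capAt μN φ n (LinearMap.rTensor C (sgnOp 𝓜 k) (ΔM m)) := by
  simp only [cap, capAt, LinearMap.comp_apply, LinearMap.rTensor_tmul]
  induction LinearMap.rTensor C (sgnOp 𝓜 k) (ΔM m) using TensorProduct.induction_on with
  | zero => simp
  | tmul m' c => simp
  | add x y hx hy => simp only [TensorProduct.add_tmul, map_add, hx, hy]

lemma cap_zero_tmul (𝓜 : ℤ → Submodule R M) [DirectSum.Decomposition 𝓜]
    (ΔM : M →ₗ[R] M ⊗[R] C) (μN : A ⊗[R] N →ₗ[R] N) (φ : C →ₗ[R] A) (m : M) (n : N) :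
    cap 𝓜 ΔM μN 0 φ (m ⊗ₜ n) = capAt μN φ n (ΔM m) := by
  rw [cap_tmul, sgnOp_zero, LinearMap.rTensor_id, LinearMap.id_apply]

lemma dTens_tmul_of_mem (𝓜 : ℤ → Submodule R M) [DirectSum.Decomposition 𝓜]
    (dM : M →ₗ[R] M) (dN : N →ₗ[R] N) {i : ℤ} {m : M} (hm : m ∈ 𝓜 i) (n : N) :
    dTens 𝓜 dM dN (m ⊗ₜ n) = dM m ⊗ₜ n + sgn i • (m ⊗ₜ dN n) := by
  rw [dTens, LinearMap.add_apply, LinearMap.comp_apply, LinearMap.rTensor_tmul,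
    LinearMap.rTensor_tmul, sgnOp_apply_of_mem 𝓜 1 hm, one_mul, ← TensorProduct.smul_tmul',
    map_zsmul, LinearMap.lTensor_tmul]

lemma dTens_comp_dTens (𝓜 : ℤ → Submodule R M) [DirectSum.Decomposition 𝓜]
    {dM : M →ₗ[R] M} {dN : N →ₗ[R] N}
    (hdM : IsDeg 𝓜 𝓜 (-1) dM) (hdM2 : dM ∘ₗ dM = 0) (hdN2 : dN ∘ₗ dN = 0) :
    dTens 𝓜 dM dN ∘ₗ dTens 𝓜 dM dN = 0 := by
  refine tensorProduct_ext_of_homogeneous 𝓜 fun i m hm n => ?_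
  have hddm : dM (dM m) = 0 := LinearMap.congr_fun hdM2 m
  have hddn : dN (dN n) = 0 := LinearMap.congr_fun hdN2 n
  rw [LinearMap.comp_apply, dTens_tmul_of_mem 𝓜 dM dN hm, map_add, map_zsmul,
    dTens_tmul_of_mem 𝓜 dM dN (hdM i m hm), dTens_tmul_of_mem 𝓜 dM dN hm, hddm, hddn,
    ← sub_eq_add_neg, sgn_sub_one]
  simp only [TensorProduct.zero_tmul, TensorProduct.tmul_zero, smul_zero, add_zero, zero_add,
    neg_smul, LinearMap.zero_apply]
  abel

lemma capAt_act_eq_capAt_mul {μN : A ⊗[R] N →ₗ[R] N}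
    (hmul : ∀ (a b : A) (x : N), μN ((a * b) ⊗ₜ x) = μN (a ⊗ₜ μN (b ⊗ₜ x)))
    (φ ψ : C →ₗ[R] A) (σ : C →ₗ[R] C) (n : N) (w : M ⊗[R] C) (c : C) :
    capAt μN φ (μN (ψ c ⊗ₜ n)) (LinearMap.lTensor M σ w)
      = capAt μN (LinearMap.mul' R A ∘ₗ TensorProduct.map φ ψ ∘ₗ LinearMap.rTensor C σ) n
          (TensorProduct.assoc R M C C (w ⊗ₜ c)) := by
  induction w using TensorProduct.induction_on with
  | zero => simp
  | tmul m c' => simp [hmul]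
  | add x y hx hy => simp only [map_add, TensorProduct.add_tmul, hx, hy]

lemma cap_comp_cap (𝒞 : ℤ → Submodule R C) [DirectSum.Decomposition 𝒞]
    (𝓜 : ℤ → Submodule R M) [DirectSum.Decomposition 𝓜]
    {Δ : C →ₗ[R] C ⊗[R] C} {ΔM : M →ₗ[R] M ⊗[R] C} {μN : A ⊗[R] N →ₗ[R] N}
    (hcoassoc : (TensorProduct.assoc R M C C).toLinearMap ∘ₗ
        LinearMap.rTensor C ΔM ∘ₗ ΔM = LinearMap.lTensor M Δ ∘ₗ ΔM)
    (hdeg : ∀ i : ℤ, ∀ x ∈ 𝓜 i, ΔM x ∈ ⨆ p : ℤ, tmul' (𝓜 p) (𝒞 (i - p)))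
    (hmul : ∀ (a b : A) (x : N), μN ((a * b) ⊗ₜ x) = μN (a ⊗ₜ μN (b ⊗ₜ x)))
    (k : ℤ) (φ ψ : C →ₗ[R] A) :
    cap 𝓜 ΔM μN k φ ∘ₗ cap 𝓜 ΔM μN k ψ = cap 𝓜 ΔM μN 0 (cup 𝒞 Δ k φ ψ) := by
  refine tensorProduct_ext_of_homogeneous 𝓜 fun i m hm n => ?_
  set χ := LinearMap.mul' R A ∘ₗ TensorProduct.map φ ψ ∘ₗ LinearMap.rTensor C (sgnOp 𝒞 k)
  -- the two signs `(-1)^(k|m'|)` collected along the way combine into `(-1)^(k|c'|)`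
  have hsummand : ∀ z ∈ ⨆ p : ℤ, tmul' (𝓜 p) (𝒞 (i - p)),
      cap 𝓜 ΔM μN k φ (capAt μN ψ n (LinearMap.rTensor C (sgnOp 𝓜 k) z))
        = capAt μN χ n (TensorProduct.assoc R M C C (LinearMap.rTensor C ΔM z)) := by
    refine fun z hz => (LinearMap.mem_eqLocus).1 (iSup_tmul'_le_eqLocus _ _
      (f := cap 𝓜 ΔM μN k φ ∘ₗ capAt μN ψ n ∘ₗ LinearMap.rTensor C (sgnOp 𝓜 k))
      (g := capAt μN χ n ∘ₗ (TensorProduct.assoc R M C C).toLinearMap ∘ₗ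
        LinearMap.rTensor C ΔM) (fun p m' hm' c _ => ?_) hz)
    simp only [LinearMap.comp_apply, LinearMap.rTensor_tmul, LinearEquiv.coe_coe]
    rw [sgnOp_apply_of_mem 𝓜 k hm', ← TensorProduct.smul_tmul', map_zsmul, capAt_tmul,
      map_zsmul, cap_tmul, rTensor_sgnOp_eq_smul_lTensor_sgnOp 𝓜 𝒞 k p (hdeg p m' hm'),
      map_zsmul, smul_smul, sgn_mul_self, one_smul, capAt_act_eq_capAt_mul hmul]
  have hco : TensorProduct.assoc R M C C (LinearMap.rTensor C ΔM (ΔM m))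
      = LinearMap.lTensor M Δ (ΔM m) := LinearMap.congr_fun hcoassoc m
  rw [LinearMap.comp_apply, cap_tmul, hsummand _ (hdeg i m hm), hco, cap_zero_tmul,
    ← LinearMap.comp_apply (capAt μN χ n), capAt_comp_lTensor]
  rfl

lemma dTens_comp_cap_add_cap_comp_dTens (𝒞 : ℤ → Submodule R C) [DirectSum.Decomposition 𝒞]
    (𝒜 : ℤ → Submodule R A) (𝓜 : ℤ → Submodule R M) [DirectSum.Decomposition 𝓜]
    {ΔM : M →ₗ[R] M ⊗[R] C} {dM : M →ₗ[R] M} {dC : C →ₗ[R] C} {dA : A →ₗ[R] A}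
    {dN : N →ₗ[R] N} {μN : A ⊗[R] N →ₗ[R] N} {τ : C →ₗ[R] A}
    (hdeg : ∀ i : ℤ, ∀ x ∈ 𝓜 i, ΔM x ∈ ⨆ p : ℤ, tmul' (𝓜 p) (𝒞 (i - p)))
    (hchain : ΔM ∘ₗ dM = (LinearMap.rTensor C dM +
        LinearMap.lTensor M dC ∘ₗ LinearMap.rTensor C (sgnOp 𝓜 1)) ∘ₗ ΔM)
    (hdM : IsDeg 𝓜 𝓜 (-1) dM) (hτ : IsDeg 𝒞 𝒜 (-1) τ)
    (hleibniz : ∀ i : ℤ, ∀ a ∈ 𝒜 i, ∀ x : N,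
        dN (μN (a ⊗ₜ x)) = μN (dA a ⊗ₜ x) + sgn i • μN (a ⊗ₜ dN x)) :
    dTens 𝓜 dM dN ∘ₗ cap 𝓜 ΔM μN (-1) τ + cap 𝓜 ΔM μN (-1) τ ∘ₗ dTens 𝓜 dM dN
      = cap 𝓜 ΔM μN 0 (dA ∘ₗ τ + τ ∘ₗ dC) := by
  refine tensorProduct_ext_of_homogeneous 𝓜 fun i m hm n => ?_
  have hΔd : ΔM (dM m) = LinearMap.rTensor C dM (ΔM m) +
      LinearMap.lTensor M dC (LinearMap.rTensor C (sgnOp 𝓜 1) (ΔM m)) :=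
    LinearMap.congr_fun hchain m
  rw [LinearMap.add_apply, LinearMap.comp_apply, LinearMap.comp_apply,
    dTens_tmul_of_mem 𝓜 dM dN hm, map_add, map_zsmul, cap_tmul, cap_tmul, cap_tmul, hΔd,
    cap_zero_tmul]
  -- in each summand `m' ⊗ c`, the terms `dM m' ⊗ τ(c)·n` and `m' ⊗ τ(c)·dN n` cancel in pairs
  suffices hsummand : ∀ z ∈ ⨆ p : ℤ, tmul' (𝓜 p) (𝒞 (i - p)),
      (dTens 𝓜 dM dN ∘ₗ capAt μN τ n ∘ₗ LinearMap.rTensor C (sgnOp 𝓜 (-1)) +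
        (capAt μN τ n ∘ₗ LinearMap.rTensor C (sgnOp 𝓜 (-1)) ∘ₗ
          (LinearMap.rTensor C dM + LinearMap.lTensor M dC ∘ₗ LinearMap.rTensor C (sgnOp 𝓜 1)) +
        sgn i • capAt μN τ (dN n) ∘ₗ LinearMap.rTensor C (sgnOp 𝓜 (-1)))) z
        = capAt μN (dA ∘ₗ τ + τ ∘ₗ dC) n z by
    simpa only [LinearMap.add_apply, LinearMap.comp_apply, LinearMap.smul_apply]
      using hsummand _ (hdeg i m hm)
  refine fun z hz => (LinearMap.mem_eqLocus).1
    (iSup_tmul'_le_eqLocus _ _ (fun p m' hm' c hc => ?_) hz)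
  have hsgn : sgn (i - p + -1) = -(sgn i * sgn p) := by
    rw [← sub_eq_add_neg, sgn_sub_one, sub_eq_add_neg, sgn_add, sgn_neg]
  simp only [LinearMap.add_apply, LinearMap.comp_apply, LinearMap.smul_apply, map_add,
    map_zsmul, LinearMap.rTensor_tmul, LinearMap.lTensor_tmul, sgnOp_apply_of_mem 𝓜 _ hm',
    sgnOp_apply_of_mem 𝓜 _ (hdM p m' hm'), ← TensorProduct.smul_tmul', capAt_tmul,
    dTens_tmul_of_mem 𝓜 dM dN hm', hleibniz _ (τ c) (hτ _ c hc), hsgn]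
  simp only [one_mul, sgn_neg, ← sub_eq_add_neg, sgn_sub_one, smul_add, smul_smul,
    sgn_mul_self, one_smul, neg_smul, neg_mul, TensorProduct.tmul_sub, TensorProduct.tmul_smul,
    TensorProduct.add_tmul, map_add, TensorProduct.tmul_add]
  abel

end Cap

end HPT

open HPT in
theorem statement3_general
    {R : Type} [CommRing R]
    {C : Type} [AddCommGroup C] [Module R C]
    (𝒞 : ℤ → Submodule R C) [DirectSum.Decomposition 𝒞]
    (Δ : C →ₗ[R] C ⊗[R] C) (εC : C →ₗ[R] R) (dC : C →ₗ[R] C) (e : C)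
    {A : Type} [Ring A] [Algebra R A]
    (𝒜 : ℤ → Submodule R A) (dA : A →ₗ[R] A) (εA : A →ₐ[R] R)
    {M : Type} [AddCommGroup M] [Module R M]
    (𝓜 : ℤ → Submodule R M) [DirectSum.Decomposition 𝓜]
    (dM : M →ₗ[R] M) (ΔM : M →ₗ[R] M ⊗[R] C)
    {N : Type} [AddCommGroup N] [Module R N]
    (𝒩 : ℤ → Submodule R N) (dN : N →ₗ[R] N) (μN : A ⊗[R] N →ₗ[R] N)
    (hM : IsDGComod 𝒞 Δ εC dC 𝓜 dM ΔM)
    (hN : IsDGModLeft 𝒜 dA 𝒩 dN μN)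
    (τ : C →ₗ[R] A) (hτ : IsTwisting 𝒞 Δ εC dC e 𝒜 dA εA τ) :
    (dTens 𝓜 dM dN - cap 𝓜 ΔM μN (-1) τ) ∘ₗ (dTens 𝓜 dM dN - cap 𝓜 ΔM μN (-1) τ) = 0 := by
  have hDτ : dA ∘ₗ τ + τ ∘ₗ dC = cup 𝒞 Δ (-1) τ τ := by
    simpa [DhGen, sgn] using hτ.eq
  set d := dTens 𝓜 dM dN
  set T := cap 𝓜 ΔM μN (-1) τ
  calc (d - T) ∘ₗ (d - T) = d ∘ₗ d - (d ∘ₗ T + T ∘ₗ d) + T ∘ₗ T := by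
        simp only [LinearMap.comp_sub, LinearMap.sub_comp]
        abel
    _ = 0 := by
        rw [dTens_comp_dTens 𝓜 hM.d_deg hM.d_sq hN.d_sq,
          dTens_comp_cap_add_cap_comp_dTens 𝒞 𝒜 𝓜 hM.deg hM.chain hM.d_deg hτ.deg hN.chain,
          cap_comp_cap 𝒞 𝓜 hM.coassoc hM.deg hN.mul_act, hDτ]
        abel

open HPT in
/-- for a twisting cochain `τ : C → A`, the operator
`d_τ = d - (τ ∩ ·)` on `M ⊗ N` squares to zero, so `M ⊗_τ N` is a chain complex. -/
theorem statement3
    {R : Type} [CommRing R]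
    {C : Type} [AddCommGroup C] [Module R C]
    (𝒞 : ℤ → Submodule R C) [DirectSum.Decomposition 𝒞]
    (Δ : C →ₗ[R] C ⊗[R] C) (εC : C →ₗ[R] R) (dC : C →ₗ[R] C) (e : C)
    {A : Type} [Ring A] [Algebra R A]
    (𝒜 : ℤ → Submodule R A) [GradedAlgebra 𝒜] (dA : A →ₗ[R] A) (εA : A →ₐ[R] R)
    {M : Type} [AddCommGroup M] [Module R M]
    (𝓜 : ℤ → Submodule R M) [DirectSum.Decomposition 𝓜]
    (dM : M →ₗ[R] M) (ΔM : M →ₗ[R] M ⊗[R] C)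
    {N : Type} [AddCommGroup N] [Module R N]
    (𝒩 : ℤ → Submodule R N) (dN : N →ₗ[R] N) (μN : A ⊗[R] N →ₗ[R] N)
    (hC : IsDGCoalg 𝒞 Δ εC dC) (hCe : IsCoaug Δ εC dC 𝒞 e)
    (hA : IsDGAlg 𝒜 dA) (hAug : IsAug 𝒜 dA εA)
    (hM : IsDGComod 𝒞 Δ εC dC 𝓜 dM ΔM)
    (hN : IsDGModLeft 𝒜 dA 𝒩 dN μN)
    (τ : C →ₗ[R] A) (hτ : IsTwisting 𝒞 Δ εC dC e 𝒜 dA εA τ) :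
    (dTens 𝓜 dM dN - cap 𝓜 ΔM μN (-1) τ) ∘ₗ (dTens 𝓜 dM dN - cap 𝓜 ΔM μN (-1) τ) = 0 :=
  statement3_general 𝒞 Δ εC dC e 𝒜 dA εA 𝓜 dM ΔM 𝒩 dN μN hM hN τ hτ
end
end

section
/- (Dold) A chain complex N of R-modules is contractible (i.e., admits a degree-1 map h with dh + hd = Id) if and only if N is isomorphic, as a chain complex, to the cone of the identity map on some chain complex; concretely, if dh + hd = Id and hh = 0 then the maps (hd, h): N_n → (hN)_{n-1} ⊕ (hN)_n and their inverses exhibit N as isomorphic to the cone on the complex hN. -/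
open scoped TensorProduct DirectSum

noncomputable section
namespace HPT

/-- The differential of the cone of the identity of `(P, dP)`:
`(x, y) ↦ (-dP x, x + dP y)`. -/
def coneD {R : Type} [CommRing R] {P : Type} [AddCommGroup P] [Module R P]
    (dP : P →ₗ[R] P) : P × P →ₗ[R] P × P :=
  LinearMap.prod (-(dP ∘ₗ LinearMap.fst R P P))
    (LinearMap.fst R P P + dP ∘ₗ LinearMap.snd R P P)

end HPT

open HPT in
/-- Dold: a chain complex `N` is contractible (there is a degree-1 map
`h` with `dh + hd = Id`) iff it is isomorphic, as a (graded) chain complex, to the cone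
of the identity on some chain complex. -/
theorem statement7
    {R : Type} [CommRing R]
    {N : Type} [AddCommGroup N] [Module R N]
    (𝒩 : ℤ → Submodule R N) [DirectSum.Decomposition 𝒩]
    (dN : N →ₗ[R] N) (hdeg : IsDeg 𝒩 𝒩 (-1) dN) (hsq : dN ∘ₗ dN = 0) :
    (∃ h : N →ₗ[R] N, IsDeg 𝒩 𝒩 1 h ∧ dN ∘ₗ h + h ∘ₗ dN = LinearMap.id) ↔
      (∃ (P : ModuleCat R) (Pgr : ℤ → Submodule R P) (dP : P →ₗ[R] P),
        IsDeg Pgr Pgr (-1) dP ∧ dP ∘ₗ dP = 0 ∧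
        ∃ eqv : N ≃ₗ[R] (P × P),
          (∀ n : ℤ, Submodule.map eqv.toLinearMap (𝒩 n) = (Pgr (n - 1)).prod (Pgr n))
          ∧ eqv.toLinearMap ∘ₗ dN = coneD dP ∘ₗ eqv.toLinearMap) := by
  constructor
  · rintro ⟨h0, h0deg, h0id⟩
    have key : ∀ x, dN (h0 x) + h0 (dN x) = x := fun x => by
      simpa using LinearMap.ext_iff.mp h0id x
    have dd : ∀ x : N, dN (dN x) = 0 := fun x => by
      simpa using LinearMap.ext_iff.mp hsq x
    have L : ∀ x : N, dN (h0 (dN x)) = dN x := fun x => by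
      have := key (dN x); rwa [dd, map_zero, add_zero] at this
    set h : N →ₗ[R] N := h0 ∘ₗ dN ∘ₗ h0 with hdef
    have happ : ∀ x, h x = h0 (dN (h0 x)) := fun x => rfl
    have hdh : ∀ x, h (dN (h x)) = h x := by
      intro x
      show h0 (dN (h0 (dN (h0 (dN (h0 x)))))) = h0 (dN (h0 x))
      rw [L (h0 x), L (h0 x)]
    have hh : ∀ x, h (h x) = 0 := by
      intro x
      have e1 : h0 (dN (h0 x)) = h0 x - dN (h0 (h0 x)) := eq_sub_of_add_eq' (key (h0 x))
      calc h (h x) = h0 (dN (h0 (h0 (dN (h0 x))))) := rfl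
        _ = h0 (dN (h0 (h0 x) - h0 (dN (h0 (h0 x))))) := by rw [e1, map_sub]
        _ = h0 (dN (h0 (h0 x)) - dN (h0 (dN (h0 (h0 x))))) := by rw [map_sub]
        _ = 0 := by rw [L (h0 (h0 x)), sub_self, map_zero]
    have hd_dh : ∀ x, h (dN x) + dN (h x) = x := by
      intro x
      show h0 (dN (h0 (dN x))) + dN (h0 (dN (h0 x))) = x
      rw [L x, L (h0 x), add_comm]
      exact key x
    have hDeg : IsDeg 𝒩 𝒩 1 h := by
      intro i x hx
      have h3 := h0deg (i + 1 + -1) _ (hdeg (i + 1) _ (h0deg i x hx))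
      have e : i + 1 + -1 + 1 = i + 1 := by ring
      rw [e] at h3
      exact h3
    -- the two pointwise facts on the range of h
    have mem1 : ∀ a : N, a ∈ LinearMap.range h → h (dN a) = a := by
      rintro _ ⟨u, rfl⟩; exact hdh u
    have mem2 : ∀ a : N, a ∈ LinearMap.range h → h a = 0 := by
      rintro _ ⟨u, rfl⟩; exact hh u
    let f : N →ₗ[R] ↥(LinearMap.range h) × ↥(LinearMap.range h) :=
      LinearMap.prod
        (LinearMap.codRestrict (LinearMap.range h) (h ∘ₗ dN)
          fun x => LinearMap.mem_range_self h (dN x))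
        (LinearMap.codRestrict (LinearMap.range h) h
          fun x => LinearMap.mem_range_self h x)
    let g : ↥(LinearMap.range h) × ↥(LinearMap.range h) →ₗ[R] N :=
      (LinearMap.range h).subtype ∘ₗ LinearMap.fst R _ _ +
        dN ∘ₗ (LinearMap.range h).subtype ∘ₗ LinearMap.snd R _ _
    have fapp : ∀ x : N, f x = (⟨h (dN x), LinearMap.mem_range_self h (dN x)⟩,
        ⟨h x, LinearMap.mem_range_self h x⟩) := fun x => rfl
    have gapp : ∀ p : ↥(LinearMap.range h) × ↥(LinearMap.range h),
        g p = (p.1 : N) + dN (p.2 : N) := fun p => rfl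
    have hfg : f ∘ₗ g = LinearMap.id := by
      apply LinearMap.ext
      rintro ⟨⟨a, ha⟩, ⟨b, hb⟩⟩
      apply Prod.ext <;> apply Subtype.ext
      · show h (dN (a + dN b)) = a
        rw [map_add, map_add, dd, map_zero, add_zero, mem1 a ha]
      · show h (a + dN b) = b
        rw [map_add, mem2 a ha, mem1 b hb, zero_add]
    have hgf : g ∘ₗ f = LinearMap.id := by
      apply LinearMap.ext
      intro x
      show h (dN x) + dN (h x) = x
      exact hd_dh x
    let eqv : N ≃ₗ[R] ↥(LinearMap.range h) × ↥(LinearMap.range h) :=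
      LinearEquiv.ofLinear f g hfg hgf
    refine ⟨ModuleCat.of R ↥(LinearMap.range h),
      fun m => (𝒩 (m + 1)).comap (LinearMap.range h).subtype, 0, ?_, ?_, eqv, ?_, ?_⟩
    · intro i x hx
      simp only [LinearMap.zero_apply]
      exact Submodule.zero_mem _
    · ext x; simp
    · intro n
      apply le_antisymm
      · rintro p ⟨x, hx, rfl⟩
        rw [Submodule.mem_prod]
        constructor
        · show h (dN x) ∈ 𝒩 (n - 1 + 1)
          have e : n - 1 + 1 = n + -1 + 1 := by ring
          rw [e]
          exact hDeg _ _ (hdeg n x hx)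
        · show h x ∈ 𝒩 (n + 1)
          exact hDeg n x hx
      · rintro ⟨⟨a, ha⟩, ⟨b, hb⟩⟩ hp
        rw [Submodule.mem_prod] at hp
        obtain ⟨h1, h2⟩ := hp
        have h1' : a ∈ 𝒩 n := by
          have e : n - 1 + 1 = n := by ring
          have := h1
          simp only [Submodule.mem_comap, Submodule.coe_subtype, e] at this
          exact this
        have h2'' : b ∈ 𝒩 (n + 1) := by
          have := h2
          simp only [Submodule.mem_comap, Submodule.coe_subtype] at this
          exact this
        have h2' : dN b ∈ 𝒩 n := by
          have := hdeg (n + 1) b h2''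
          have e : n + 1 + -1 = n := by ring
          rwa [e] at this
        refine ⟨a + dN b, Submodule.add_mem _ h1' h2', ?_⟩
        have := LinearMap.ext_iff.mp hfg (⟨a, ha⟩, ⟨b, hb⟩)
        exact this
    · apply LinearMap.ext
      intro x
      apply Prod.ext <;> apply Subtype.ext
      · show h (dN (dN x)) = -((0 : ↥(LinearMap.range h) →ₗ[R] ↥(LinearMap.range h))
            ((eqv x).1) : N)
        rw [dd, map_zero]
        simp
      · show h (dN x) = (((eqv x).1 : ↥(LinearMap.range h)) : N) +
            (((0 : ↥(LinearMap.range h) →ₗ[R] ↥(LinearMap.range h)) ((eqv x).2)) : N)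
        simp only [LinearMap.zero_apply, ZeroMemClass.coe_zero, add_zero]
        rfl
  · rintro ⟨P, Pgr, dP, _, _, eqv, hgr, hcomm⟩
    have ceq : ∀ y : N, eqv (dN y) = coneD dP (eqv y) := fun y =>
      LinearMap.ext_iff.mp hcomm y
    let H : ↑P × ↑P →ₗ[R] ↑P × ↑P := LinearMap.prod (LinearMap.snd R ↑P ↑P) 0
    refine ⟨eqv.symm.toLinearMap ∘ₗ H ∘ₗ eqv.toLinearMap, ?_, ?_⟩
    · intro n x hx
      have hx1 : eqv x ∈ (Pgr (n - 1)).prod (Pgr n) := by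
        rw [← hgr n]
        exact Submodule.mem_map_of_mem hx
      rw [Submodule.mem_prod] at hx1
      have hH : H (eqv x) ∈ Submodule.map eqv.toLinearMap (𝒩 (n + 1)) := by
        rw [hgr (n + 1), Submodule.mem_prod]
        constructor
        · show (eqv x).2 ∈ Pgr (n + 1 - 1)
          have e : n + 1 - 1 = n := by ring
          rw [e]
          exact hx1.2
        · exact Submodule.zero_mem _
      obtain ⟨y, hy, hy2⟩ := hH
      show eqv.symm (H (eqv x)) ∈ 𝒩 (n + 1)
      rw [← hy2]
      simpa using hy
    · apply LinearMap.ext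
      intro x
      simp only [LinearMap.add_apply, LinearMap.comp_apply, LinearEquiv.coe_coe,
        LinearMap.id_apply]
      apply eqv.injective
      rw [map_add, ceq, eqv.apply_symm_apply, ceq x, eqv.apply_symm_apply]
      set p := eqv x with hp
      show coneD dP (H p) + H (coneD dP p) = p
      simp only [coneD, H, LinearMap.prod_apply, Pi.prod, LinearMap.add_apply,
        LinearMap.neg_apply, LinearMap.comp_apply, LinearMap.fst_apply, LinearMap.snd_apply,
        LinearMap.zero_apply, Prod.mk_add_mk, map_zero, add_zero]
      rw [Prod.ext_iff]
      constructor <;> simp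
end
end

section
/- Let U be a complete augmented differential graded algebra, p ∈ U a degree-0 idempotent cycle, and h ∈ U an element of degree 1 with dh = 1 - p. Define τ₁ = τ^{B̄U}: B̄U → U, the universal bar construction twisting cochain (the desuspension on sIU and zero on higher tensor powers), and for j ≥ 2 define τ_j: (sIU)^{⊗j} → U by τ_j[α₁|...|α_j] = α₁·h·α₂·h·...·α_{j-1}·h·α_j (j-1 copies of h). Then τ^h = τ₁ + τ₂ + ... : B̄U → U satisfies the twisting cochain equation with respect to the deconcatenation coalgebra structure on B̄U and the new composition α∘β = αpβ on U: D(τ^h) + τ^h ∘ ∂ = τ^h ⊙ τ^h, where ∂ is the bar construction coalgebra perturbation (the coderivation induced by the multiplication of U) and ⊙ is the cup pairing formed with ∘. -/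
open scoped TensorProduct DirectSum

noncomputable section
namespace HPT

/-- `wval h [a₁, …, a_j] = a₁ · h · a₂ · h · ⋯ · h · a_j` (with `j-1` copies of `h`);
the value of the twisting cochain `τ^h` on a bar-construction word. -/
def wval {U : Type} [Ring U] (h : U) : List U → U
  | [] => 0
  | [a] => a
  | a :: b :: rest => a * h * wval h (b :: rest)

/-- Extend a `Fin j`-indexed family by zero. -/
def extFn {j : ℕ} {β : Type} [Zero β] (f : Fin j → β) : ℕ → β :=
  fun k => if hk : k < j then f ⟨k, hk⟩ else 0

/-- The segment `[α_s, …, α_{s+t-1}]` of the word `α`. -/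
def seg {j : ℕ} {U : Type} [Ring U] (α : Fin j → U) (s t : ℕ) : List U :=
  (List.range' s t).map (extFn α)

/-- The product of the bar signs `(-1)^{|α_i|+1}` over the first `m` entries. -/
def bs {j : ℕ} (degs : Fin j → ℤ) (m : ℕ) : ℤ :=
  ∏ i ∈ Finset.range m, sgn (extFn degs i + 1)

end HPT


/-!
Peel off the first letter: `τ^h[α₀|…|α_{j-1}] = α₀ · h · w` with `w = τ^h[α₁|…|α_{j-1}]`.
The Leibniz rule and `dh = 1 - p` give
`d(α₀ h w) = dα₀ · h · w ± (α₀ h dw - α₀ w + α₀ p w)`,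
and `α₀ w`, `α₀ p w` are precisely the first summands of `τ^h ∘ ∂` and `τ^h ⊙ τ^h`,
while `α₀ h dw` is handled by induction on the length of the word.
-/

namespace HPT

lemma sgn_eq_negOnePow (k : ℤ) : sgn k = (k.negOnePow : ℤ) := by
  rcases Int.even_or_odd k with h | h
  · rw [sgn, (Int.natAbs_even.2 h).neg_one_pow, Int.negOnePow_even k h, Units.val_one]
  · rw [sgn, (Int.natAbs_odd.2 h).neg_one_pow, Int.negOnePow_odd k h, Units.val_neg,
      Units.val_one]

section Tuple

variable {n : ℕ} {β : Type} [Zero β]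

lemma extFn_zero (f : Fin (n + 1) → β) : extFn f 0 = f 0 := by
  simp [extFn]

lemma extFn_tail (f : Fin (n + 1) → β) : extFn (Fin.tail f) = fun k => extFn f (k + 1) := by
  funext k
  by_cases hk : k < n
  · simp [extFn, hk, Fin.tail]
  · simp [extFn, hk]

lemma extFn_succ (f : Fin (n + 1) → β) (k : ℕ) : extFn f (k + 1) = extFn (Fin.tail f) k := by
  rw [extFn_tail]

end Tuple

lemma sgn_sum_eq_bs {j : ℕ} (degs : Fin j → ℤ) (m : ℕ) :
    sgn (∑ i ∈ Finset.range m, (extFn degs i + 1)) = bs degs m := by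
  induction m with
  | zero => rfl
  | succ m ih => rw [Finset.sum_range_succ, sgn_add, ih, bs, bs, Finset.prod_range_succ]

lemma bs_succ {n : ℕ} (degs : Fin (n + 1) → ℤ) (k : ℕ) :
    bs degs (k + 1) = sgn (degs 0 + 1) * bs (Fin.tail degs) k := by
  rw [bs, bs, Finset.prod_range_succ', extFn_tail, extFn_zero, mul_comm]

theorem IsDGAlg.d_mul_mul {R U : Type} [CommRing R] [Ring U] [Algebra R U]
    {𝒰 : ℤ → Submodule R U} {dU : U →ₗ[R] U} (hU : IsDGAlg 𝒰 dU) {p hel : U}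
    (hhel : hel ∈ 𝒰 1) (hdh : dU hel = 1 - p) {i : ℤ} {a : U} (ha : a ∈ 𝒰 i) (w : U) :
    dU (a * hel * w) = dU a * hel * w + sgn (i + 1) • (a * hel * dU w - a * w + a * p * w) := by
  rw [mul_assoc, hU.leibniz i a ha, hU.leibniz 1 hel hhel, hdh, sgn_add,
    show sgn 1 = -1 from rfl]
  simp only [sub_mul, one_mul, mul_add, mul_sub, mul_smul_comm, mul_assoc]
  module

section Word

variable {U : Type} [Ring U] (h : U)

lemma seg_succ_start {n : ℕ} (α : Fin (n + 1) → U) (s t : ℕ) :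
    seg α (s + 1) t = seg (Fin.tail α) s t := by
  rw [seg, seg, extFn_tail, List.range'_succ_left, List.map_map]
  rfl

lemma seg_zero_succ {n : ℕ} (α : Fin (n + 1) → U) (t : ℕ) :
    seg α 0 (t + 1) = α 0 :: seg (Fin.tail α) 0 t := by
  rw [← seg_succ_start, seg, seg, List.range'_succ, List.map_cons, extFn_zero]

lemma wval_cons_of_ne_nil (a : U) {L : List U} (hL : L ≠ []) :
    wval h (a :: L) = a * h * wval h L := by
  cases L with
  | nil => exact absurd rfl hL
  | cons b L => rfl

lemma wval_mul_cons (a b : U) (L : List U) : wval h (a * b :: L) = a * wval h (b :: L) := by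
  cases L with
  | nil => rfl
  | cons c L => simp only [wval, mul_assoc]

lemma wval_seg_zero_succ_succ {n : ℕ} (α : Fin (n + 1) → U) (t : ℕ) :
    wval h (seg α 0 (t + 2)) = α 0 * h * wval h (seg (Fin.tail α) 0 (t + 1)) := by
  rw [seg_zero_succ, wval_cons_of_ne_nil _ _ (by simp [seg, List.range'_succ])]

lemma wval_seg_insert_succ {n : ℕ} (α : Fin (n + 1) → U) (x : U) (k c t : ℕ) :
    wval h (seg α 0 (k + 1) ++ [x] ++ seg α (k + 1 + c) t)
      = α 0 * h * wval h (seg (Fin.tail α) 0 k ++ [x] ++ seg (Fin.tail α) (k + c) t) := by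
  rw [seg_zero_succ, Nat.add_right_comm, seg_succ_start, List.cons_append, List.cons_append,
    wval_cons_of_ne_nil _ _ (by simp)]

end Word

section BarTerms

variable {U : Type} [Ring U] (h : U)

/- Evaluated on the word `[α₀|…|α_{j-1}]`, these are `-τ^h ∘ d_U`, `τ^h ∘ ∂` and `τ^h ⊙ τ^h`
(with `α ∘ β = α p β`); `bs degs k` is the suspension sign of the first `k` letters. -/

def diffTerms {j : ℕ} (degs : Fin j → ℤ) (α : Fin j → U) (d : U → U) : U :=
  ∑ k ∈ Finset.range j, bs degs k •
    wval h (seg α 0 k ++ [d (extFn α k)] ++ seg α (k + 1) (j - (k + 1)))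

def mergeTerms {j : ℕ} (degs : Fin j → ℤ) (α : Fin j → U) : U :=
  ∑ k ∈ Finset.range (j - 1), bs degs (k + 1) •
    wval h (seg α 0 k ++ [extFn α k * extFn α (k + 1)] ++ seg α (k + 2) (j - (k + 2)))

def splitTerms {j : ℕ} (degs : Fin j → ℤ) (α : Fin j → U) (p : U) : U :=
  ∑ k ∈ Finset.range (j - 1), bs degs (k + 1) •
    (wval h (seg α 0 (k + 1)) * p * wval h (seg α (k + 1) (j - (k + 1))))

variable {n : ℕ} (degs : Fin (n + 2) → ℤ) (α : Fin (n + 2) → U)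

lemma diffTerms_cons (d : U → U) :
    diffTerms h degs α d = d (α 0) * h * wval h (seg (Fin.tail α) 0 (n + 1))
      + sgn (degs 0 + 1) • (α 0 * h * diffTerms h (Fin.tail degs) (Fin.tail α) d) := by
  rw [diffTerms, Finset.sum_range_succ', add_comm, diffTerms, Finset.mul_sum, Finset.smul_sum]
  congr 1
  · rw [bs, Finset.prod_range_zero, one_smul, extFn_zero, seg_succ_start]
    exact wval_cons_of_ne_nil h _ (by simp [seg, List.range'_succ])
  · refine Finset.sum_congr rfl fun k _ => ?_
    rw [show n + 2 - (k + 1 + 1) = n + 1 - (k + 1) by omega, wval_seg_insert_succ, extFn_succ,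
      bs_succ, mul_smul, mul_smul_comm]

lemma mergeTerms_cons :
    mergeTerms h degs α = sgn (degs 0 + 1) • (α 0 * wval h (seg (Fin.tail α) 0 (n + 1)))
      + sgn (degs 0 + 1) • (α 0 * h * mergeTerms h (Fin.tail degs) (Fin.tail α)) := by
  rw [mergeTerms, show n + 2 - 1 = n + 1 from rfl, Finset.sum_range_succ', add_comm, mergeTerms,
    Finset.mul_sum, Finset.smul_sum]
  congr 1
  · rw [bs_succ, bs, Finset.prod_range_zero, mul_one, extFn_zero, extFn_succ,
      seg_zero_succ (Fin.tail α), ← wval_mul_cons, extFn_zero, ← seg_succ_start,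
      ← seg_succ_start]
    rfl
  · refine Finset.sum_congr rfl fun k _ => ?_
    rw [show n + 2 - (k + 1 + 2) = n + 1 - (k + 2) by omega, wval_seg_insert_succ, extFn_succ,
      extFn_succ, bs_succ, mul_smul, mul_smul_comm]

lemma splitTerms_cons (p : U) :
    splitTerms h degs α p = sgn (degs 0 + 1) • (α 0 * p * wval h (seg (Fin.tail α) 0 (n + 1)))
      + sgn (degs 0 + 1) • (α 0 * h * splitTerms h (Fin.tail degs) (Fin.tail α) p) := by
  rw [splitTerms, show n + 2 - 1 = n + 1 from rfl, Finset.sum_range_succ', add_comm, splitTerms,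
    Finset.mul_sum, Finset.smul_sum]
  congr 1
  · rw [bs_succ, bs, Finset.prod_range_zero, mul_one, seg_succ_start]
    rfl
  · refine Finset.sum_congr rfl fun k _ => ?_
    rw [show n + 2 - (k + 1 + 1) = n + 1 - (k + 1) by omega, wval_seg_zero_succ_succ,
      seg_succ_start, bs_succ, mul_smul, mul_smul_comm]
    simp only [mul_assoc]

end BarTerms

theorem IsDGAlg.d_wval_seg {R U : Type} [CommRing R] [Ring U] [Algebra R U]
    {𝒰 : ℤ → Submodule R U} {dU : U →ₗ[R] U} (hU : IsDGAlg 𝒰 dU) {p hel : U}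
    (hhel : hel ∈ 𝒰 1) (hdh : dU hel = 1 - p) :
    ∀ {j : ℕ} (degs : Fin j → ℤ) (α : Fin j → U), (∀ ν, α ν ∈ 𝒰 (degs ν)) →
      dU (wval hel (seg α 0 j))
        = diffTerms hel degs α dU - mergeTerms hel degs α + splitTerms hel degs α p
  | 0, _, _, _ => by simp [diffTerms, mergeTerms, splitTerms, seg, wval]
  | 1, _, _, _ => by simp [diffTerms, mergeTerms, splitTerms, seg, wval, bs, extFn]
  | n + 2, degs, α, hα => by
    rw [wval_seg_zero_succ_succ, hU.d_mul_mul hhel hdh (hα 0),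
      hU.d_wval_seg hhel hdh (Fin.tail degs) (Fin.tail α) (fun ν => hα ν.succ),
      diffTerms_cons, mergeTerms_cons, splitTerms_cons]
    simp only [mul_add, mul_sub, smul_add, smul_sub, mul_assoc]
    abel

end HPT

open HPT in
theorem statement13_general
    {R : Type} [CommRing R]
    {U : Type} [Ring U] [Algebra R U]
    (𝒰 : ℤ → Submodule R U) (dU : U →ₗ[R] U)
    (hU : IsDGAlg 𝒰 dU)
    (p : U)
    (hel : U) (hhel : hel ∈ 𝒰 1) (hdh : dU hel = 1 - p)
    (j : ℕ) (degs : Fin j → ℤ) (α : Fin j → U)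
    (hα : ∀ ν : Fin j, α ν ∈ 𝒰 (degs ν)) :
    dU (wval hel (seg α 0 j))
        - ∑ k ∈ Finset.range j, bs degs k •
            wval hel (seg α 0 k ++ [dU (extFn α k)] ++ seg α (k + 1) (j - (k + 1)))
        + ∑ k ∈ Finset.range (j - 1), bs degs (k + 1) •
            wval hel (seg α 0 k ++ [extFn α k * extFn α (k + 1)]
              ++ seg α (k + 2) (j - (k + 2)))
      = ∑ k ∈ Finset.range (j - 1),
          sgn (∑ i ∈ Finset.range (k + 1), (extFn degs i + 1)) •
            (wval hel (seg α 0 (k + 1)) * p * wval hel (seg α (k + 1) (j - (k + 1)))) := by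
  simp only [sgn_sum_eq_bs]
  change dU (wval hel (seg α 0 j)) - diffTerms hel degs α dU + mergeTerms hel degs α
    = splitTerms hel degs α p
  rw [hU.d_wval_seg hhel hdh degs α hα]
  abel

open HPT in
/-- Lemma 8.7: for a degree-0 idempotent cycle `p` and `h ∈ U₁` with
`dh = 1 - p`, the cochain `τ^h` with `τ^h[α₁|…|α_j] = α₁·h·α₂·⋯·h·α_j` satisfies
`D(τ^h) + τ^h∂ = τ^h ⊙ τ^h` with respect to the deconcatenation coalgebra structure
of `B̄U` and the composition `α∘β = αpβ`; stated here, equivalently, evaluated on an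
arbitrary generating word `[α₁|…|α_j]` of the reduced bar construction. -/
theorem statement13
    {R : Type} [CommRing R]
    {U : Type} [Ring U] [Algebra R U]
    (𝒰 : ℤ → Submodule R U) [GradedAlgebra 𝒰] (dU : U →ₗ[R] U) (εU : U →ₐ[R] R)
    (hU : IsDGAlg 𝒰 dU) (hAug : IsAug 𝒰 dU εU)
    (p : U) (hp : p ∈ 𝒰 0) (hpp : p * p = p) (hdp : dU p = 0)
    (hel : U) (hhel : hel ∈ 𝒰 1) (hdh : dU hel = 1 - p)
    (j : ℕ) (degs : Fin j → ℤ) (α : Fin j → U)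
    (hα : ∀ ν : Fin j, α ν ∈ 𝒰 (degs ν))
    (hαaug : ∀ ν : Fin j, εU (α ν) = 0) :
    dU (wval hel (seg α 0 j))
        - ∑ k ∈ Finset.range j, bs degs k •
            wval hel (seg α 0 k ++ [dU (extFn α k)] ++ seg α (k + 1) (j - (k + 1)))
        + ∑ k ∈ Finset.range (j - 1), bs degs (k + 1) •
            wval hel (seg α 0 k ++ [extFn α k * extFn α (k + 1)]
              ++ seg α (k + 2) (j - (k + 2)))
      = ∑ k ∈ Finset.range (j - 1),
          sgn (∑ i ∈ Finset.range (k + 1), (extFn degs i + 1)) •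
            (wval hel (seg α 0 (k + 1)) * p * wval hel (seg α (k + 1) (j - (k + 1)))) :=
  statement13_general 𝒰 dU hU p hel hhel hdh j degs α hα
end
end
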